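/- arXiv:2209.14236 — 11 statements merged into one kernel-verified Lean document; each statement's English description precedes it below -/
import Mathlib

section
/- Let p be a prime number and let n and j be positive integers. Then the binomial coefficient C(n-1, p^j - 1) is congruent to 1 modulo p if p^j divides n, and is congruent to 0 modulo p if p^j does not divide n. -/
open Finset Nat

lemma aux_mul_sub_one_div (a K : ℕ) (ha : 0 < a) (hK : 0 < K) : (a * K - 1) / a = K - 1 := by
  have h : a * K - 1 = a * (K - 1) + (a - 1) := by
    obtain ⟨k, rfl⟩ := Nat.exists_eq_succ_of_ne_zero hK.ne'
    rw [Nat.mul_succ, Nat.succ_sub_one]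
    generalize a * k = t
    omega
  rw [h, Nat.mul_add_div ha, Nat.div_eq_of_lt (by omega), add_zero]

lemma aux_mul_sub_one_mod (p M : ℕ) (hp : 0 < p) (hM : 0 < M) : (p * M - 1) % p = p - 1 := by
  have h : p * M - 1 = p * (M - 1) + (p - 1) := by
    obtain ⟨m, rfl⟩ := Nat.exists_eq_succ_of_ne_zero hM.ne'
    rw [Nat.mul_succ, Nat.succ_sub_one]
    generalize p * m = t
    omega
  rw [h, Nat.mul_add_mod, Nat.mod_eq_of_lt (by omega)]

lemma aux_digit (p n j i : ℕ) (hp : 2 ≤ p) (hn : 0 < n) (hd : p ^ j ∣ n) (hi : i < j) :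
    (n - 1) / p ^ i % p = p - 1 := by
  obtain ⟨q, rfl⟩ := hd
  have hppos : 0 < p := by omega
  have hq : 0 < q := by
    rcases Nat.eq_zero_or_pos q with h | h
    · simp [h] at hn
    · exact h
  have hpi : 0 < p ^ i := pow_pos hppos i
  have h1 : p ^ j * q = p ^ i * (p ^ (j - i) * q) := by
    rw [← mul_assoc, ← pow_add]; congr 2; omega
  rw [h1, aux_mul_sub_one_div _ _ hpi (Nat.mul_pos (pow_pos hppos _) hq)]
  have h2 : p ^ (j - i) * q = p * (p ^ (j - i - 1) * q) := by
    rw [← mul_assoc, ← _root_.pow_succ']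
    congr 2; omega
  rw [h2, aux_mul_sub_one_mod _ _ hppos (Nat.mul_pos (pow_pos hppos _) hq)]

lemma aux_conv (p n j : ℕ) (hp : 2 ≤ p) (hn : 0 < n)
    (h : ∀ i < j, (n - 1) / p ^ i % p = p - 1) : p ^ j ∣ n := by
  have key : (n - 1) % p ^ j = p ^ j - 1 := by
    induction j with
    | zero => simpa using Nat.mod_one (n - 1)
    | succ k ih =>
      have hk : (n - 1) % p ^ k = p ^ k - 1 := ih (fun i hi => h i (by omega))
      have hd : (n - 1) / p ^ k % p = p - 1 := h k (by omega)
      have hpk : 0 < p ^ k := pow_pos (by omega) k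
      have hm : (n - 1) % p ^ (k + 1) = p ^ k * ((n - 1) / p ^ k % p) + (n - 1) % p ^ k := by
        conv_rhs => rw [← Nat.mod_mul_right_div_self (n-1) (p^k) p,
          ← Nat.mod_mod_of_dvd (n-1) (dvd_mul_right (p^k) p)]
        rw [pow_succ]
        exact (Nat.div_add_mod _ _).symm
      rw [hm, hk, hd, pow_succ]
      have ha : 1 ≤ p ^ k := hpk
      have hb : 1 ≤ p := by omega
      have hab : 1 ≤ p ^ k * p := Nat.mul_pos hpk (by omega)
      zify [ha, hb, hab]
      ring
  have hlt : 0 < p ^ j := pow_pos (by omega) j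
  have : (n - 1 + 1) % p ^ j = 0 := by
    rw [Nat.add_mod, key]
    simp [Nat.mod_eq_of_lt, Nat.sub_add_cancel hlt]
  rw [Nat.sub_add_cancel hn] at this
  exact Nat.dvd_of_mod_eq_zero this

theorem binom_pow_prime_divisibility (p n j : ℕ) (hp : p.Prime) (hn : 0 < n) (hj : 0 < j) :
    (p ^ j ∣ n → (n - 1).choose (p ^ j - 1) ≡ 1 [MOD p]) ∧
    (¬ p ^ j ∣ n → (n - 1).choose (p ^ j - 1) ≡ 0 [MOD p]) := by
  haveI : Fact p.Prime := ⟨hp⟩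
  have hp2 := hp.two_le
  have hpj : 0 < p ^ j := pow_pos hp.pos j
  have lucas : (n - 1).choose (p ^ j - 1) ≡
      ((n - 1) / p ^ j).choose ((p ^ j - 1) / p ^ j) *
        ∏ i ∈ range j, ((n - 1) / p ^ i % p).choose ((p ^ j - 1) / p ^ i % p) [MOD p] := by
    have := @Choose.choose_modEq_choose_mul_prod_range_choose (n-1) (p^j-1) p _ j
    rw [← Int.natCast_modEq_iff]
    exact_mod_cast this
  have hdig : ∀ i < j, (p ^ j - 1) / p ^ i % p = p - 1 :=
    fun i hi => aux_digit p (p ^ j) j i hp2 hpj (dvd_refl _) hi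
  have hdiv0 : (p ^ j - 1) / p ^ j = 0 := Nat.div_eq_of_lt (by omega)
  have heq : (∏ i ∈ range j, ((n - 1) / p ^ i % p).choose ((p ^ j - 1) / p ^ i % p)) =
      ∏ i ∈ range j, ((n - 1) / p ^ i % p).choose (p - 1) :=
    Finset.prod_congr rfl (fun i hi => by rw [hdig i (mem_range.mp hi)])
  have lucas2 : (n - 1).choose (p ^ j - 1) ≡
      ∏ i ∈ range j, ((n - 1) / p ^ i % p).choose (p - 1) [MOD p] := by
    refine lucas.trans ?_
    rw [hdiv0, Nat.choose_zero_right, one_mul, heq]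
  constructor
  · intro hd
    refine lucas2.trans ?_
    have : ∏ i ∈ range j, ((n - 1) / p ^ i % p).choose (p - 1) = 1 :=
      Finset.prod_eq_one fun i hi => by
        rw [aux_digit p n j i hp2 hn hd (mem_range.mp hi), Nat.choose_self]
    rw [this]
  · intro hd
    refine lucas2.trans ?_
    have : ∏ i ∈ range j, ((n - 1) / p ^ i % p).choose (p - 1) = 0 := by
      by_contra hne
      apply hd
      apply aux_conv p n j hp2 hn
      intro i hi
      by_contra hne2
      apply hne
      apply Finset.prod_eq_zero (mem_range.mpr hi)
      have hlt : (n - 1) / p ^ i % p < p - 1 := by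
        have := Nat.mod_lt ((n-1) / p ^ i) (by omega : 0 < p)
        omega
      exact Nat.choose_eq_zero_of_lt hlt
    rw [this]
end

section
/- Let q be a positive composite number and let p be a prime dividing q. Then the binomial coefficient C(q + p - 1, q - 1) is not congruent to 0 modulo q (even though q does not divide q + p). -/
/-!
Put `n = q + p - 1`. Then `p * C(n, p) = q * C(n, p - 1)`, and by Lucas's theorem
`C(n, p - 1) ≡ 1 [MOD p]` because `p ∣ q`. So if `q` divided `C(n, p) = C(n, q - 1)`, cancelling
`q` would make `p` divide `C(n, p - 1)`, which is impossible. The second claim holds because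
`q ∣ q + p` would force `q ∣ p`, so `q = p` would be prime.
-/

namespace Nat

theorem choose_add_modEq_one_of_dvd {p q r : ℕ} (hp : p.Prime) (hpq : p ∣ q) (hr : r < p) :
    (q + r).choose r ≡ 1 [MOD p] := by
  have := Fact.mk hp
  obtain ⟨m, rfl⟩ := hpq
  have hmod : (p * m + r) % p = r := by rw [mul_add_mod, mod_eq_of_lt hr]
  have hdiv : (p * m + r) / p = m := by rw [mul_add_div hp.pos, div_eq_of_lt hr, add_zero]
  simpa [hmod, hdiv, mod_eq_of_lt hr, div_eq_of_lt hr] using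
    (Choose.choose_modEq_choose_mod_mul_choose_div_nat (n := p * m + r) (k := r) (p := p))

theorem not_dvd_choose_add_sub_one {p q : ℕ} (hp : p.Prime) (hpq : p ∣ q) (hq : q ≠ 0) :
    ¬ q ∣ (q + p - 1).choose p := by
  rintro ⟨m, hm⟩
  have hp1 := hp.one_le
  have hshift : (q + p - 1).choose p * p = (q + p - 1).choose (p - 1) * q := by
    have := choose_succ_right_eq (q + p - 1) (p - 1)
    rwa [Nat.sub_add_cancel hp1, show q + p - 1 - (p - 1) = q by omega] at this
  have hD : (q + p - 1).choose (p - 1) = p * m := by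
    rw [hm] at hshift
    exact (eq_of_mul_eq_mul_right (pos_of_ne_zero hq) (by linarith)).symm
  have hlucas : (q + p - 1).choose (p - 1) ≡ 1 [MOD p] := by
    rw [Nat.add_sub_assoc hp1]
    exact choose_add_modEq_one_of_dvd hp hpq (Nat.sub_lt hp.pos one_pos)
  exact hp.not_dvd_one ((hlucas.dvd_iff dvd_rfl).mp (hD ▸ dvd_mul_right p m))

end Nat

theorem composite_binom_not_cong_zero (q p : ℕ) (hq : 1 < q) (hq' : ¬ q.Prime)
    (hp : p.Prime) (hpq : p ∣ q) :
    ¬ ((q + p - 1).choose (q - 1) ≡ 0 [MOD q]) ∧ ¬ q ∣ (q + p) := by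
  constructor
  · rw [Nat.modEq_zero_iff_dvd, Nat.choose_symm_of_eq_add (by omega : q + p - 1 = (q - 1) + p)]
    exact Nat.not_dvd_choose_add_sub_one hp hpq (by omega)
  · rw [Nat.dvd_add_right dvd_rfl]
    intro hqp
    rcases (Nat.dvd_prime hp).mp hqp with rfl | rfl
    · exact lt_irrefl 1 hq
    · exact hq' hp
end

section
/- Let q be a positive composite number and let p be a prime that does not divide q. Then the binomial coefficient C(q + p - 1, q - 1) is congruent to 0 modulo q. -/
/- Since `(m + n + 1) * C(m + n, m) = C(m + n + 1, m + 1) * (m + 1)` and `m + 1` is coprime to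
`m + n + 1` whenever it is coprime to `n`, the factor `m + 1` must divide `C(m + n, m)`. -/
theorem Nat.succ_dvd_add_choose_of_coprime {m n : ℕ} (h : Nat.Coprime (m + 1) n) :
    m + 1 ∣ (m + n).choose m := by
  have hcop : Nat.Coprime (m + 1) (m + n + 1) := by
    rwa [add_right_comm, Nat.coprime_self_add_right]
  refine hcop.dvd_of_dvd_mul_left ⟨(m + n + 1).choose (m + 1), ?_⟩
  rw [Nat.add_one_mul_choose_eq, mul_comm]

theorem composite_binom_cong_zero_of_not_dvd_general (q p : ℕ)
    (hp : p.Prime) (hpq : ¬ p ∣ q) :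
    (q + p - 1).choose (q - 1) ≡ 0 [MOD q] := by
  obtain ⟨m, rfl⟩ : ∃ m, q = m + 1 :=
    Nat.exists_eq_succ_of_ne_zero (by rintro rfl; exact hpq (dvd_zero p))
  rw [Nat.modEq_zero_iff_dvd, show m + 1 + p - 1 = m + p by omega, Nat.add_sub_cancel]
  exact Nat.succ_dvd_add_choose_of_coprime (hp.coprime_iff_not_dvd.mpr hpq).symm

theorem composite_binom_cong_zero_of_not_dvd (q p : ℕ) (hq : 1 < q) (hq' : ¬ q.Prime)
    (hp : p.Prime) (hpq : ¬ p ∣ q) :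
    (q + p - 1).choose (q - 1) ≡ 0 [MOD q] :=
  composite_binom_cong_zero_of_not_dvd_general q p hp hpq
end

section
/- A positive integer n > 1 is prime if and only if the sum over i from 1 to n - 1 of (C(n, i) mod n) equals 0. -/
/-!
The sum of the remainders vanishes iff `n` divides every `C(n, i)` with `0 < i < n`, i.e. iff `n`
divides `g = gcd (C(n, 1), …, C(n, n - 1))`. A prime divides all these coefficients. Conversely,
`g` is the least prime factor of `n` when `n` is a prime power and `1` otherwise, so `n ∣ g`
forces `n` to be its own least prime factor.
-/

open Finset

namespace Nat

theorem sum_choose_mod_eq_zero_iff_dvd_gcd (n : ℕ) :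
    ∑ i ∈ Icc 1 (n - 1), n.choose i % n = 0 ↔ n ∣ (Icc 1 (n - 1)).gcd n.choose := by
  simp only [sum_eq_zero_iff, Finset.dvd_gcd_iff, Nat.dvd_iff_mod_eq_zero]

theorem dvd_gcd_choose_iff_prime {n : ℕ} (hn : 1 < n) :
    n ∣ (Icc 1 (n - 1)).gcd n.choose ↔ n.Prime := by
  refine ⟨fun h => ?_, fun hp => Finset.dvd_gcd fun i hi => ?_⟩
  · by_cases hpow : IsPrimePow n
    · rw [Choose.gcd_choose_eq_minFac_of_isPrimePow hpow] at h
      have hmin : n.minFac = n := (minFac_le (by omega)).antisymm (le_of_dvd (minFac_pos n) h)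
      exact prime_def_minFac.mpr ⟨hn, hmin⟩
    · rw [Choose.gcd_choose_eq_one_of_not_isPrimePow hn hpow, Nat.dvd_one] at h
      omega
  · rw [mem_Icc] at hi
    exact hp.dvd_choose_self (by omega) (by omega)

end Nat

theorem prime_iff_sum_binom_mod_eq_zero (n : ℕ) (hn : 1 < n) :
    n.Prime ↔ ∑ i ∈ Finset.Icc 1 (n - 1), (n.choose i % n) = 0 :=
  ((Nat.sum_choose_mod_eq_zero_iff_dvd_gcd n).trans (Nat.dvd_gcd_choose_iff_prime hn)).symm
end

section
/- If n is a composite positive integer and p is the smallest prime factor of n, then C(n, p) mod n > 0, i.e., n does not divide the binomial coefficient C(n, p). -/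
lemma aux_not_dvd_descFactorial (n p : ℕ) (hp : p.Prime) (hdvd : p ∣ n) (hpn : p ≤ n) :
    ¬ p ∣ (n - 1).descFactorial (p - 1) := by
  rw [Nat.descFactorial_eq_prod_range]
  intro h
  obtain ⟨i, hi, hpd⟩ := (Nat.Prime.prime hp).exists_mem_finset_dvd h
  simp only [Finset.mem_range] at hi
  have hp1 : 1 < p := hp.one_lt
  have h1 : n - 1 - i = n - (i + 1) := by omega
  rw [h1] at hpd
  have h2 : p ∣ n - (n - (i + 1)) := Nat.dvd_sub hdvd hpd
  have h3 : n - (n - (i + 1)) = i + 1 := by omega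
  rw [h3] at h2
  have := Nat.le_of_dvd (by omega) h2
  omega

theorem composite_binom_minFac_mod_pos (n : ℕ) (hn : 1 < n) (hn' : ¬ n.Prime) :
    0 < n.choose n.minFac % n ∧ ¬ n ∣ n.choose n.minFac := by
  set p := n.minFac with hpdef
  have hp : p.Prime := Nat.minFac_prime (by omega)
  have hp1 : 1 < p := hp.one_lt
  have hdvd : p ∣ n := Nat.minFac_dvd n
  have hpn : p ≤ n := Nat.le_of_dvd (by omega) hdvd
  have hkey : n * (n - 1).choose (p - 1) = n.choose p * p := by
    have h0 := Nat.add_one_mul_choose_eq (n - 1) (p - 1)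
    have h1 : n - 1 + 1 = n := by omega
    have h2 : p - 1 + 1 = p := by omega
    rwa [h1, h2] at h0
  have hnotdvd : ¬ n ∣ n.choose p := by
    rintro ⟨t, ht⟩
    rw [ht, Nat.mul_assoc] at hkey
    have h4 : (n - 1).choose (p - 1) = t * p := Nat.eq_of_mul_eq_mul_left (by omega) hkey
    have h5 : p ∣ (n - 1).descFactorial (p - 1) := by
      rw [Nat.descFactorial_eq_factorial_mul_choose, h4]
      exact ⟨(p - 1).factorial * t, by ring⟩
    exact aux_not_dvd_descFactorial n p hp hdvd hpn h5
  refine ⟨?_, hnotdvd⟩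
  rcases Nat.eq_zero_or_pos (n.choose p % n) with h | h
  · exact absurd (Nat.dvd_of_mod_eq_zero h) hnotdvd
  · exact h
end

section
/- An integer n > 3 is prime if and only if the sum, over all primes p with p ≤ √n, of (C(n, p) mod n) equals 0. -/
/-!
A prime `n` divides `C(n, p)` for every `0 < p < n`. A composite `n` has its least prime
factor `p` below `√n`, and `n` does not divide `C(n, p)`: from `p * C(n, p) = n * C(n - 1, p - 1)`
it would follow that `p ∣ C(n - 1, p - 1)`, whereas Lucas' theorem gives
`C(n - 1, p - 1) ≡ 1 [MOD p]` because `n - 1 ≡ p - 1 [MOD p]`.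
-/

theorem Nat.Prime.choose_pred_pred_modEq_one {p n : ℕ} (hp : p.Prime) (hpn : p ∣ n) (hn : n ≠ 0) :
    (n - 1).choose (p - 1) ≡ 1 [MOD p] := by
  have := Fact.mk hp
  obtain ⟨m, rfl⟩ := hpn
  obtain ⟨m, rfl⟩ := Nat.exists_eq_succ_of_ne_zero (right_ne_zero_of_mul hn)
  have hp0 := hp.pos
  have hsplit : p * (m + 1) - 1 = (p - 1) + p * m := by
    rw [Nat.mul_succ]; omega
  have hmod : (p * (m + 1) - 1) % p = p - 1 := by
    rw [hsplit, Nat.add_mul_mod_self_left, Nat.mod_eq_of_lt (by omega)]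
  have hdiv : (p * (m + 1) - 1) / p = m := by
    rw [hsplit, Nat.add_mul_div_left _ _ hp0, Nat.div_eq_of_lt (by omega), zero_add]
  have hpred : (p - 1) / p = 0 := Nat.div_eq_of_lt (by omega)
  simpa [hmod, hdiv, hpred, Nat.mod_eq_of_lt (show p - 1 < p by omega)] using
    Choose.choose_modEq_choose_mod_mul_choose_div_nat (n := p * (m + 1) - 1) (k := p - 1) (p := p)

theorem Nat.Prime.not_dvd_choose_of_dvd {p n : ℕ} (hp : p.Prime) (hpn : p ∣ n) (hn : n ≠ 0) :
    ¬ n ∣ n.choose p := by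
  intro hdvd
  have hsucc : n.choose p * p = n * (n - 1).choose (p - 1) := by
    have := Nat.add_one_mul_choose_eq (n - 1) (p - 1)
    rw [Nat.sub_add_cancel (Nat.one_le_iff_ne_zero.mpr hn), Nat.sub_add_cancel hp.one_le] at this
    exact this.symm
  have : p ∣ (n - 1).choose (p - 1) := by
    rw [← Nat.mul_dvd_mul_iff_left (Nat.pos_of_ne_zero hn), ← hsucc]
    exact Nat.mul_dvd_mul_right hdvd p
  exact hp.not_dvd_one (((hp.choose_pred_pred_modEq_one hpn hn).dvd_iff dvd_rfl).mp this)

theorem prime_iff_sum_binom_primes_le_sqrt (n : ℕ) (hn : 3 < n) :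
    n.Prime ↔
      ∑ p ∈ (Finset.range (n + 1)).filter (fun p => p.Prime ∧ p ^ 2 ≤ n),
        (n.choose p % n) = 0 := by
  have lt_of_sq_le {p : ℕ} (hp : p.Prime) (hsq : p ^ 2 ≤ n) : p < n :=
    (lt_self_pow₀ hp.one_lt one_lt_two).trans_le hsq
  simp only [Finset.sum_eq_zero_iff, Finset.mem_filter, Finset.mem_range, ← Nat.dvd_iff_mod_eq_zero]
  constructor
  · rintro hn_prime p ⟨-, hp, hsq⟩
    exact hn_prime.dvd_choose_self hp.ne_zero (lt_of_sq_le hp hsq)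
  · intro hdvd
    by_contra hn_comp
    have hp := Nat.minFac_prime (by omega : n ≠ 1)
    have hsq := Nat.minFac_sq_le_self (by omega) hn_comp
    exact hp.not_dvd_choose_of_dvd n.minFac_dvd (by omega)
      (hdvd _ ⟨by linarith [lt_of_sq_le hp hsq], hp, hsq⟩)
end

section
/- An integer n > 1 is prime if and only if the sum over i from 0 to ⌊n/2⌋ - 1 of (C(n + i, i + 1) mod n) equals 0. -/
/-!
A prime `n` divides `C(n + i, i + 1)` whenever `i + 1 < n`. If `n` is composite with least prime
factor `p`, then `p ≤ n / 2`, and the term with `i + 1 = p` is not divisible by `n`: since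
`p * C(n + p - 1, p) = n * C(n + p - 1, p - 1)`, divisibility by `n` would give
`p ∣ C(n + p - 1, p - 1)`, whereas Lucas' theorem gives `C(n + p - 1, p - 1) ≡ 1 [MOD p]`.
-/

namespace Nat

theorem choose_add_modEq_one {p n k : ℕ} [Fact p.Prime] (hpn : p ∣ n) (hk : k < p) :
    (n + k).choose k ≡ 1 [MOD p] := by
  obtain ⟨m, rfl⟩ := hpn
  have hp : 0 < p := (Fact.out : p.Prime).pos
  have hmod : (p * m + k) % p = k := by rw [Nat.mul_add_mod, Nat.mod_eq_of_lt hk]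
  have hdiv : (p * m + k) / p = m := by rw [Nat.mul_add_div hp, Nat.div_eq_of_lt hk, add_zero]
  simpa [hmod, hdiv, Nat.mod_eq_of_lt hk, Nat.div_eq_of_lt hk] using
    (Choose.choose_modEq_choose_mod_mul_choose_div_nat : (p * m + k).choose k ≡ _ [MOD p])

theorem not_dvd_choose_add_pred {p n : ℕ} (hp : p.Prime) (hpn : p ∣ n) (hn : n ≠ 0) :
    ¬ n ∣ (n + (p - 1)).choose p := by
  have := Fact.mk hp
  rintro ⟨c, hc⟩
  have key : (n + (p - 1)).choose p * p = (n + (p - 1)).choose (p - 1) * n := by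
    simpa [Nat.sub_add_cancel hp.one_le] using Nat.choose_succ_right_eq (n + (p - 1)) (p - 1)
  have hchoose : (n + (p - 1)).choose (p - 1) = c * p := by
    apply Nat.eq_of_mul_eq_mul_left (Nat.pos_of_ne_zero hn)
    rw [mul_comm _ (choose _ _), ← key, hc]; ring
  have hone := choose_add_modEq_one hpn (Nat.sub_lt hp.pos one_pos)
  rw [hchoose, Nat.ModEq, Nat.mul_mod_left, Nat.mod_eq_of_lt hp.one_lt] at hone
  exact zero_ne_one hone

end Nat

theorem prime_iff_sum_pascal_binom (n : ℕ) (hn : 1 < n) :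
    n.Prime ↔ ∑ i ∈ Finset.range (n / 2), ((n + i).choose (i + 1) % n) = 0 := by
  simp only [Finset.sum_eq_zero_iff, Finset.mem_range, ← Nat.dvd_iff_mod_eq_zero]
  constructor
  · intro hp i hi
    exact hp.dvd_choose (by omega) (by omega) (Nat.le_add_right n i)
  · intro hdvd
    by_contra hnp
    have hp : n.minFac.Prime := Nat.minFac_prime (by omega)
    have hle : n.minFac ≤ n / 2 :=
      (Nat.minFac_le_div (by omega) hnp).trans (Nat.div_le_div_left hp.two_le two_pos)
    have hterm := hdvd (n.minFac - 1) (by have := hp.pos; omega)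
    rw [Nat.sub_add_cancel hp.one_le] at hterm
    exact Nat.not_dvd_choose_add_pred hp (Nat.minFac_dvd n) (by omega) hterm
end

section
/- An integer n > 3 is prime if and only if the sum, over all primes p with p ≤ √n, of (C(n - 1, p - 1) mod p) equals 0. -/
/-!
By Lucas' theorem, `C(n - 1, p - 1) mod p` is `1` when `p ∣ n` and `0` otherwise. So the sum
counts the prime divisors `p` of `n` with `p² ≤ n`, and it vanishes exactly when `n` has no prime
factor at most `√n`, i.e. when `n` is prime.
-/

namespace Nat

theorem choose_sub_one_mod_prime {p : ℕ} (hp : p.Prime) (m : ℕ) :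
    m.choose (p - 1) % p = if m % p = p - 1 then 1 else 0 := by
  have := Fact.mk hp
  have hlt : p - 1 < p := sub_lt hp.pos one_pos
  have lucas : m.choose (p - 1) ≡ (m % p).choose (p - 1) [MOD p] := by
    simpa [mod_eq_of_lt hlt, div_eq_of_lt hlt] using
      Choose.choose_modEq_choose_mod_mul_choose_div_nat (n := m) (k := p - 1) (p := p)
  rw [lucas]
  split_ifs with h
  · rw [h, choose_self, mod_eq_of_lt hp.one_lt]
  · rw [choose_eq_zero_of_lt (by have := mod_lt m hp.pos; omega), zero_mod]

theorem sub_one_mod_eq_sub_one_iff_dvd {n p : ℕ} (hn : 0 < n) (hp : 0 < p) :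
    (n - 1) % p = p - 1 ↔ p ∣ n := by
  obtain ⟨m, rfl⟩ := exists_add_one_eq.mpr hn
  obtain ⟨q, rfl⟩ := exists_add_one_eq.mpr hp
  have hq : q % (q + 1) = q := mod_eq_of_lt (lt_add_one q)
  rw [Nat.add_sub_cancel, Nat.add_sub_cancel, ← modEq_zero_iff_dvd, ← modEq_add_modulus_iff,
    zero_add]
  exact ⟨fun h => ModEq.add_right 1 (h.trans hq.symm), fun h => Eq.trans (h.add_right_cancel' 1) hq⟩

theorem sub_one_choose_sub_one_mod_prime {n p : ℕ} (hp : p.Prime) (hn : 0 < n) :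
    (n - 1).choose (p - 1) % p = if p ∣ n then 1 else 0 := by
  rw [choose_sub_one_mod_prime hp]
  exact if_congr (sub_one_mod_eq_sub_one_iff_dvd hn hp.pos) rfl rfl

theorem prime_iff_forall_prime_sq_le_not_dvd {n : ℕ} (hn : 2 ≤ n) :
    n.Prime ↔ ∀ p, p.Prime → p ^ 2 ≤ n → ¬p ∣ n := by
  refine ⟨fun hprime p hp hpn hdvd => ?_, fun h => by_contra fun hnp => ?_⟩
  · rw [(prime_dvd_prime_iff_eq hp hprime).mp hdvd] at hpn
    nlinarith
  · exact h _ (minFac_prime (by omega)) (minFac_sq_le_self (by omega) hnp) (minFac_dvd n)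

end Nat

theorem prime_iff_sum_binom_mod_p (n : ℕ) (hn : 3 < n) :
    n.Prime ↔
      ∑ p ∈ (Finset.range (n + 1)).filter (fun p => p.Prime ∧ p ^ 2 ≤ n),
        ((n - 1).choose (p - 1) % p) = 0 := by
  have term_eq_zero_iff {p : ℕ} (hp : p.Prime) : (n - 1).choose (p - 1) % p = 0 ↔ ¬p ∣ n := by
    simp [Nat.sub_one_choose_sub_one_mod_prime hp (by omega : 0 < n)]
  rw [Finset.sum_eq_zero_iff, Nat.prime_iff_forall_prime_sq_le_not_dvd (by omega)]
  refine forall_congr' fun p => ?_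
  simp only [Finset.mem_filter, Finset.mem_range]
  refine ⟨fun h ⟨_, hp, hp2⟩ => (term_eq_zero_iff hp).mpr (h hp hp2), fun h hp hp2 => ?_⟩
  have hpn : p < n + 1 := by nlinarith [hp.two_le]
  exact (term_eq_zero_iff hp).mp (h ⟨hpn, hp, hp2⟩)
end

section
/- An integer n > 3 is prime if and only if the sum, over all primes p with p ≤ √n, of (C(n + p - 1, n - 1) mod n) equals 0. -/
/-!
Both directions rest on the identity `C(n + p - 1, p) * p = n * C(n + p - 1, p - 1)`.
If `n` is prime and `p < n`, then `n` is coprime to `p` and so divides `C(n + p - 1, p)`.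
If `n` is composite, its least prime factor `q` satisfies `q² ≤ n`; were `n` to divide
`C(n + q - 1, q)`, the identity would give `q ∣ C(n + q - 1, q - 1)`, whereas by Lucas' theorem
this coefficient is `≡ 1 (mod q)` since `q ∣ n` and `q - 1 < q`.
-/

namespace Nat

theorem choose_add_sub_one_mul {n p : ℕ} (hp : 0 < p) :
    (n + p - 1).choose p * p = n * (n + p - 1).choose (p - 1) := by
  obtain ⟨k, rfl⟩ := exists_add_one_eq.mpr hp
  rw [Nat.add_sub_cancel, ← Nat.add_assoc, Nat.add_sub_cancel, choose_succ_right_eq,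
    Nat.add_sub_cancel, mul_comm]

theorem dvd_choose_add_sub_one_of_coprime {n p : ℕ} (hp : 0 < p) (h : n.Coprime p) :
    n ∣ (n + p - 1).choose p :=
  h.dvd_of_dvd_mul_right ⟨_, choose_add_sub_one_mul hp⟩

theorem choose_mul_add_modEq_one {p m k : ℕ} [Fact p.Prime] (hk : k < p) :
    (p * m + k).choose k ≡ 1 [MOD p] := by
  have hp : 0 < p := Fact.out (p := p.Prime) |>.pos
  have lucas :=
    Choose.choose_modEq_choose_mod_mul_choose_div_nat (n := p * m + k) (k := k) (p := p)
  rwa [mul_add_mod, mod_eq_of_lt hk, choose_self, mul_add_div hp, div_eq_of_lt hk, Nat.add_zero,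
    choose_zero_right, Nat.one_mul] at lucas

theorem not_dvd_choose_add_sub_one_s11 {n q : ℕ} (hq : q.Prime) (hqn : q ∣ n) (hn : n ≠ 0) :
    ¬ n ∣ (n + q - 1).choose q := by
  have := Fact.mk hq
  intro hdvd
  have hq_dvd : q ∣ (n + q - 1).choose (q - 1) := by
    rw [← Nat.mul_dvd_mul_iff_left (Nat.pos_of_ne_zero hn), ← choose_add_sub_one_mul hq.pos]
    exact Nat.mul_dvd_mul_right hdvd q
  obtain ⟨m, rfl⟩ := hqn
  have hone : (q * m + (q - 1)).choose (q - 1) ≡ 1 [MOD q] :=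
    choose_mul_add_modEq_one (Nat.sub_lt hq.pos Nat.one_pos)
  rw [← Nat.add_sub_assoc hq.one_le] at hone
  exact hq.not_dvd_one ((hone.dvd_iff dvd_rfl).mp hq_dvd)

end Nat

open Finset Nat

theorem prime_iff_sum_binom_mod_n (n : ℕ) (hn : 3 < n) :
    n.Prime ↔
      ∑ p ∈ (Finset.range (n + 1)).filter (fun p => p.Prime ∧ p ^ 2 ≤ n),
        ((n + p - 1).choose (n - 1) % n) = 0 := by
  have choose_eq {p : ℕ} (hp : p.Prime) : (n + p - 1).choose (n - 1) = (n + p - 1).choose p :=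
    choose_symm_of_eq_add (by have := hp.pos; omega)
  rw [sum_eq_zero_iff]
  constructor
  · intro hn_prime p hp_mem
    obtain ⟨-, hp, hp_sq⟩ := by simpa only [mem_filter, mem_range] using hp_mem
    have hp_lt : p < n := by nlinarith [hp.two_le]
    rw [choose_eq hp, ← dvd_iff_mod_eq_zero]
    exact dvd_choose_add_sub_one_of_coprime hp.pos
      ((hn_prime.coprime_iff_not_dvd).mpr (Nat.not_dvd_of_pos_of_lt hp.pos hp_lt))
  · intro h_terms
    by_contra hn_composite
    have hq : n.minFac.Prime := minFac_prime (by omega)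
    have hq_sq : n.minFac ^ 2 ≤ n := minFac_sq_le_self (by omega) hn_composite
    refine not_dvd_choose_add_sub_one_s11 hq (minFac_dvd n) (by omega) ?_
    rw [dvd_iff_mod_eq_zero, ← choose_eq hq]
    exact h_terms _ (mem_filter.mpr ⟨mem_range.mpr (by nlinarith [hq.two_le]), hq, hq_sq⟩)
end

section
/- Let n > 3 be a composite integer. Then there exists a prime p with p ≤ √n (i.e., p^2 ≤ n) such that p divides n and C(n + p - 1, n - 1) mod n > 0. -/
theorem composite_exists_prime_witness (n : ℕ) (hn : 3 < n) (hn' : ¬ n.Prime) :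
    ∃ p : ℕ, p.Prime ∧ p ^ 2 ≤ n ∧ p ∣ n ∧ 0 < (n + p - 1).choose (n - 1) % n := by
  have hn1 : n ≠ 1 := by omega
  have hn0 : n ≠ 0 := by omega
  have hp : n.minFac.Prime := Nat.minFac_prime hn1
  have hpd : n.minFac ∣ n := Nat.minFac_dvd n
  have hsq : n.minFac ^ 2 ≤ n := Nat.minFac_sq_le_self (by omega) hn'
  refine ⟨n.minFac, hp, hsq, hpd, ?_⟩
  generalize hq : n.minFac = p at *
  have hp2 : 2 ≤ p := hp.two_le
  have hpn : p ≤ n := Nat.le_of_dvd (by omega) hpd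
  -- rewrite the binomial coefficient
  have hsymm : (n + p - 1).choose (n - 1) = (n + p - 1).choose p := by
    have h1 : (n + p - 1) - p = n - 1 := by omega
    rw [← h1, Nat.choose_symm (by omega)]
  -- key identity
  have hkey : Nat.factorial p * (n + p - 1).choose (n - 1)
      = n * ((n + 1).ascFactorial (p - 1)) := by
    rw [hsymm, ← Nat.ascFactorial_eq_factorial_mul_choose']
    have hps : p = (p - 1) + 1 := by omega
    rw [hps, Nat.ascFactorial_succ, ← Nat.succ_ascFactorial]
    simp
  -- p does not divide the ascFactorial
  have hpR : ¬ p ∣ (n + 1).ascFactorial (p - 1) := by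
    have hgen : ∀ k, k ≤ p - 1 → ¬ p ∣ (n + 1).ascFactorial k := by
      intro k
      induction k with
      | zero =>
        intro _ h
        rw [Nat.ascFactorial_zero] at h
        have hp1 := Nat.eq_one_of_dvd_one h
        omega
      | succ k ih =>
        intro hk
        rw [Nat.ascFactorial_succ]
        intro hdvd
        rcases (Nat.Prime.dvd_mul hp).mp hdvd with h | h
        · have h2 : p ∣ (1 + k) := by
            have h3 : n + 1 + k = n + (1 + k) := by omega
            rw [h3] at h
            exact (Nat.dvd_add_right hpd).mp h
          have := Nat.le_of_dvd (by omega) h2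
          omega
        · exact ih (by omega) h
    exact hgen (p - 1) le_rfl
  have hnC : ¬ n ∣ (n + p - 1).choose (n - 1) := by
    intro hdvd
    have ha1 : 1 ≤ n.factorization p := hp.factorization_pos_of_dvd hn0 hpd
    have hpa : p ^ n.factorization p ∣ n := Nat.ordProj_dvd n p
    have h1 : p ^ (n.factorization p + 1) ∣ Nat.factorial p * (n + p - 1).choose (n - 1) := by
      rw [pow_succ, mul_comm (p ^ n.factorization p) p]
      exact mul_dvd_mul (Nat.dvd_factorial (by omega) le_rfl) (hpa.trans hdvd)
    rw [hkey] at h1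
    have hcop : Nat.Coprime (p ^ (n.factorization p + 1)) ((n + 1).ascFactorial (p - 1)) :=
      Nat.Coprime.pow_left _ ((Nat.Prime.coprime_iff_not_dvd hp).mpr hpR)
    have h2 : p ^ (n.factorization p + 1) ∣ n := (Nat.Coprime.dvd_of_dvd_mul_right hcop) h1
    exact Nat.pow_succ_factorization_not_dvd hn0 hp h2
  have hCmod : (n + p - 1).choose (n - 1) % n ≠ 0 := fun h =>
    hnC (Nat.dvd_iff_mod_eq_zero.mpr h)
  exact Nat.pos_of_ne_zero hCmod
end

section
/- Let n > 3 be a composite integer. Then there exists a prime p with p ≤ √n (i.e., p^2 ≤ n) such that p divides n and C(n - 1, p - 1) mod p > 0. -/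
theorem composite_exists_prime_witness' (n : ℕ) (hn : 3 < n) (hn' : ¬ n.Prime) :
    ∃ p : ℕ, p.Prime ∧ p ^ 2 ≤ n ∧ p ∣ n ∧ 0 < (n - 1).choose (p - 1) % p := by
  set p := n.minFac with hp
  have hpp : p.Prime := Nat.minFac_prime (by omega)
  haveI : Fact p.Prime := ⟨hpp⟩
  have hdvd : p ∣ n := Nat.minFac_dvd n
  refine ⟨p, hpp, Nat.minFac_sq_le_self (by omega) hn', hdvd, ?_⟩
  obtain ⟨m, hm⟩ := hdvd
  have hp2 : 2 ≤ p := hpp.two_le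
  have hm1 : 1 ≤ m := by nlinarith [hm ▸ hn]
  have hm' : n = p * (m - 1) + p := by
    have h1 : m - 1 + 1 = m := by omega
    conv_lhs => rw [hm, ← h1]
    ring
  have hmod : (n - 1) % p = p - 1 := by
    have h2 : n - 1 = p * (m - 1) + (p - 1) := by omega
    rw [h2, Nat.mul_add_mod, Nat.mod_eq_of_lt (by omega)]
  have h := (Choose.choose_modEq_choose_mod_mul_choose_div_nat (p := p) (n := n - 1)
    (k := p - 1))
  rw [hmod, Nat.mod_eq_of_lt (show p - 1 < p by omega),
    Nat.div_eq_of_lt (show p - 1 < p by omega), Nat.choose_self, Nat.choose_zero_right] at h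
  simp only [Nat.ModEq] at h
  rw [h]
  simp [Nat.mod_eq_of_lt (show 1 < p by omega)]
end
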